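/- Let n ≥ 2 and let ∇ = ∇⁰ + Γ be a symplectic connection on (ℝ^{2n},Ω) of Ricci type, with Ricci tensor r. Then there exists a smooth 1-form u : ℝ^{2n} → V* such that for all x ∈ ℝ^{2n} and all X,Y,Z ∈ V: (∇_X r)(x)(Y,Z) = (1/(2n+1))·(Ω(X,Y)·u(x)(Z) + Ω(X,Z)·u(x)(Y)). -/

import Mathlib

noncomputable section

/-- The standard symplectic form on `ℝ^{2n}`. -/
def Omega (n : ℕ) (x y : Fin (2*n) → ℝ) : ℝ :=
  ∑ i : Fin n, (x ⟨i.1, by have := i.isLt; omega⟩ * y ⟨n + i.1, by have := i.isLt; omega⟩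
    - x ⟨n + i.1, by have := i.isLt; omega⟩ * y ⟨i.1, by have := i.isLt; omega⟩)

/-- The curvature `R(x)(X,Y) = (D_XΓ)(x)(Y) − (D_YΓ)(x)(X) + Γ(x)(X)∘Γ(x)(Y) − Γ(x)(Y)∘Γ(x)(X)`
of the symplectic connection `∇ = ∇⁰ + Γ` on `ℝ^{2n}`. -/
def curv (n : ℕ) (Γ : (Fin (2*n) → ℝ) → (Fin (2*n) → ℝ) →L[ℝ] (Fin (2*n) → ℝ) →L[ℝ] (Fin (2*n) → ℝ))
    (x X Y : Fin (2*n) → ℝ) : (Fin (2*n) → ℝ) →L[ℝ] (Fin (2*n) → ℝ) :=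
  fderiv ℝ Γ x X Y - fderiv ℝ Γ x Y X + (Γ x X).comp (Γ x Y) - (Γ x Y).comp (Γ x X)

/-- The Ricci tensor `r(x)(X,Y) = Tr(Z ↦ R(x)(X,Z)Y)` (trace computed in the
standard basis `e_a = Pi.single a 1` of `ℝ^{2n}`). -/
def ricci (n : ℕ) (Γ : (Fin (2*n) → ℝ) → (Fin (2*n) → ℝ) →L[ℝ] (Fin (2*n) → ℝ) →L[ℝ] (Fin (2*n) → ℝ))
    (x X Y : Fin (2*n) → ℝ) : ℝ :=
  ∑ a : Fin (2*n), curv n Γ x X (Pi.single a 1) Y a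

/-- `∇` is of Ricci type: the curvature equals its Ricci part `E`. -/
def IsRicciType (n : ℕ)
    (Γ : (Fin (2*n) → ℝ) → (Fin (2*n) → ℝ) →L[ℝ] (Fin (2*n) → ℝ) →L[ℝ] (Fin (2*n) → ℝ)) : Prop :=
  ∀ x X Y Z T, Omega n (curv n Γ x X Y Z) T =
    -(1/(2*((n:ℝ)+1))) * (2 * Omega n X Y * ricci n Γ x Z T
      + Omega n X Z * ricci n Γ x Y T + Omega n X T * ricci n Γ x Y Z
      - Omega n Y Z * ricci n Γ x X T - Omega n Y T * ricci n Γ x X Z)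

/-- The covariant derivative of the Ricci tensor:
`(∇_X r)(x)(Y,Z) = D_X(r(·)(Y,Z))(x) − r(x)(Γ(x)(X)Y,Z) − r(x)(Y,Γ(x)(X)Z)`. -/
def nablaRicci (n : ℕ)
    (Γ : (Fin (2*n) → ℝ) → (Fin (2*n) → ℝ) →L[ℝ] (Fin (2*n) → ℝ) →L[ℝ] (Fin (2*n) → ℝ))
    (x X Y Z : Fin (2*n) → ℝ) : ℝ :=
  fderiv ℝ (fun p => ricci n Γ p Y Z) x X - ricci n Γ x (Γ x X Y) Z - ricci n Γ x Y (Γ x X Z)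

/-!
Write `E(ρ)` (`ricciPart ρ`) for the right-hand side of the Ricci-type identity, so that
`Ω(R(X,Y)Z,T) = E(r)(X,Y,Z,T)`. Contracting this identity with `Ω` (`symplecticTrace`) in the
second and fourth slots shows that `r` is symmetric. Differentiating it covariantly, the second
Bianchi identity `∑_{cyc X,Y,Z} (∇_X R)(Y,Z) = 0` of the torsion-free connection becomes the
algebraic condition `∑_{cyc X,Y,Z} E(S X)(Y,Z,W,T) = 0` on `S = ∇r`, which is symmetric in its
last two slots. Contracting that condition in `(Z,T)` shows that
`A(X,Y,Z) = (2n+1) S(X,Y,Z) - Ω(X,Y) u(Z) - Ω(X,Z) u(Y)`, where `u(Y)` is the `Ω`-trace of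
`(a,b) ↦ S(a,Y,b)`, is symmetric in its first two slots as well. `A` satisfies the cyclic
condition too, and with `T = W` it reduces to `Ω(Y,Z) A(X,W,W) + Ω(Z,X) A(Y,W,W) + Ω(X,Y) A(Z,W,W)
= 0`. For `n ≥ 2` every basis vector `X` is `Ω`-orthogonal to some Darboux pair `(Y,Z)`, so
`A(X,W,W) = 0`, and `A = 0` by polarization.
-/

open scoped ContDiff

namespace SymplecticRicci

abbrev V (n : ℕ) := Fin (2*n) → ℝ

variable {n : ℕ}

-- Without these, instance search fails on `V n →L[ℝ] V n →L[ℝ] V n →L[ℝ] V n`, where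
-- `fderiv ℝ Γ` lives.
local instance : NormedAddCommGroup (V n →L[ℝ] V n →L[ℝ] V n) := inferInstance

local instance : NormedSpace ℝ (V n →L[ℝ] V n →L[ℝ] V n) := inferInstance

def lo (i : Fin n) : Fin (2*n) := ⟨i, by omega⟩

def hi (i : Fin n) : Fin (2*n) := ⟨n + i, by omega⟩

@[simp] lemma lo_inj {i j : Fin n} : lo i = lo j ↔ i = j := by simp [lo, Fin.ext_iff]

@[simp] lemma hi_inj {i j : Fin n} : hi i = hi j ↔ i = j := by simp [hi, Fin.ext_iff]

@[simp] lemma lo_ne_hi (i j : Fin n) : lo i ≠ hi j := by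
  simp only [lo, hi, ne_eq, Fin.ext_iff]; omega

lemma lo_or_hi (a : Fin (2*n)) : (∃ j, a = lo j) ∨ ∃ j, a = hi j := by
  by_cases h : a.1 < n
  · exact .inl ⟨⟨a, h⟩, rfl⟩
  · exact .inr ⟨⟨a - n, by omega⟩, Fin.ext (by simp only [hi]; omega)⟩

lemma sum_eq_sum_lo_add_hi (f : Fin (2*n) → ℝ) :
    ∑ a, f a = ∑ i : Fin n, (f (lo i) + f (hi i)) := by
  rw [← (finCongr (two_mul n)).symm.sum_comp, Fin.sum_univ_add, ← Finset.sum_add_distrib]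
  rfl

lemma Omega_apply (x y : V n) :
    Omega n x y = ∑ i : Fin n, (x (lo i) * y (hi i) - x (hi i) * y (lo i)) := rfl

lemma Omega_swap (x y : V n) : Omega n y x = -Omega n x y := by
  simp only [Omega_apply, ← Finset.sum_neg_distrib]
  exact Finset.sum_congr rfl fun i _ => by ring

lemma Omega_add_left (x y z : V n) : Omega n (x + y) z = Omega n x z + Omega n y z := by
  simp only [Omega_apply, Pi.add_apply, ← Finset.sum_add_distrib]
  exact Finset.sum_congr rfl fun i _ => by ring

lemma Omega_smul_left (c : ℝ) (x z : V n) : Omega n (c • x) z = c * Omega n x z := by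
  simp only [Omega_apply, Pi.smul_apply, smul_eq_mul, Finset.mul_sum]
  exact Finset.sum_congr rfl fun i _ => by ring

lemma Omega_sub_left (x y z : V n) : Omega n (x - y) z = Omega n x z - Omega n y z := by
  simp only [Omega_apply, Pi.sub_apply, ← Finset.sum_sub_distrib]
  exact Finset.sum_congr rfl fun i _ => by ring

lemma Omega_add_right (x y z : V n) : Omega n z (x + y) = Omega n z x + Omega n z y := by
  rw [Omega_swap, Omega_add_left, Omega_swap x, Omega_swap y]; ring

lemma Omega_single_lo (x : V n) (j : Fin n) : Omega n x (Pi.single (lo j) 1) = -x (hi j) := by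
  simp [Omega_apply, Pi.single_apply]

lemma Omega_single_hi (x : V n) (j : Fin n) : Omega n x (Pi.single (hi j) 1) = x (lo j) := by
  simp [Omega_apply, Pi.single_apply]

lemma Omega_single_lo_left (x : V n) (j : Fin n) :
    Omega n (Pi.single (lo j) 1) x = x (hi j) := by
  rw [Omega_swap, Omega_single_lo, neg_neg]

lemma Omega_single_hi_left (x : V n) (j : Fin n) :
    Omega n (Pi.single (hi j) 1) x = -x (lo j) := by
  rw [Omega_swap, Omega_single_hi]

lemma eq_zero_of_Omega_eq_zero {v : V n} (h : ∀ w, Omega n v w = 0) : v = 0 := by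
  funext a
  obtain ⟨j, rfl⟩ | ⟨j, rfl⟩ := lo_or_hi a
  · simpa [Omega_single_hi] using h (Pi.single (hi j) 1)
  · simpa [Omega_single_lo] using h (Pi.single (lo j) 1)

lemma _root_.IsLinearMap.apply_eq_sum_mul_single {ι : Type*} [Fintype ι] [DecidableEq ι]
    {g : (ι → ℝ) → ℝ} (hg : IsLinearMap ℝ g) (Y : ι → ℝ) :
    g Y = ∑ a, Y a * g (Pi.single a 1) := by
  have hY : Y = ∑ a, Y a • Pi.single a (1 : ℝ) := by ext j; simp [Pi.single_apply]
  conv_lhs => rw [hY, ← IsLinearMap.mk'_apply hg, map_sum]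
  simp

def symplecticTrace (B : V n → V n → ℝ) : ℝ :=
  ∑ i : Fin n, (B (Pi.single (lo i) 1) (Pi.single (hi i) 1)
    - B (Pi.single (hi i) 1) (Pi.single (lo i) 1))

@[simp] lemma symplecticTrace_zero : symplecticTrace (fun _ _ : V n => (0 : ℝ)) = 0 := by
  simp [symplecticTrace]

@[simp] lemma symplecticTrace_add (f g : V n → V n → ℝ) :
    symplecticTrace (fun a b => f a b + g a b) = symplecticTrace f + symplecticTrace g := by
  simp only [symplecticTrace, ← Finset.sum_add_distrib]
  exact Finset.sum_congr rfl fun i _ => by ring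

@[simp] lemma symplecticTrace_sub (f g : V n → V n → ℝ) :
    symplecticTrace (fun a b => f a b - g a b) = symplecticTrace f - symplecticTrace g := by
  simp only [symplecticTrace, ← Finset.sum_sub_distrib]
  exact Finset.sum_congr rfl fun i _ => by ring

@[simp] lemma symplecticTrace_const_mul (c : ℝ) (f : V n → V n → ℝ) :
    symplecticTrace (fun a b => c * f a b) = c * symplecticTrace f := by
  simp only [symplecticTrace, Finset.mul_sum]
  exact Finset.sum_congr rfl fun i _ => by ring

lemma symplecticTrace_swap (f : V n → V n → ℝ) :
    symplecticTrace (fun a b => f b a) = -symplecticTrace f := by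
  simp only [symplecticTrace, ← Finset.sum_neg_distrib]
  exact Finset.sum_congr rfl fun i _ => by ring

lemma symplecticTrace_eq_zero_of_symm {f : V n → V n → ℝ} (hf : ∀ a b, f a b = f b a) :
    symplecticTrace f = 0 := by
  have := symplecticTrace_swap f
  simp only [← hf] at this
  linarith

@[simp] lemma symplecticTrace_Omega_mul (c : ℝ) :
    symplecticTrace (fun a b => Omega n a b * c) = 2 * n * c := by
  simp only [symplecticTrace, Omega_single_hi, Pi.single_eq_same, one_mul, Omega_single_lo,
    neg_mul, sub_neg_eq_add, Finset.sum_const, Finset.card_univ, Fintype.card_fin, smul_add,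
    nsmul_eq_mul]
  ring

lemma trace_eq_symplecticTrace (f : V n → V n) :
    ∑ a, f (Pi.single a 1) a = symplecticTrace (fun a b => Omega n (f a) b) := by
  simp only [symplecticTrace, Omega_single_hi, Omega_single_lo, sum_eq_sum_lo_add_hi,
    sub_neg_eq_add]

@[simp] lemma symplecticTrace_Omega_left_mul {g : V n → ℝ} (hg : IsLinearMap ℝ g) (Y : V n) :
    symplecticTrace (fun a b => Omega n a Y * g b) = g Y := by
  rw [hg.apply_eq_sum_mul_single Y, sum_eq_sum_lo_add_hi]
  simp only [symplecticTrace, Omega_single_lo_left, Omega_single_hi_left]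
  exact Finset.sum_congr rfl fun i _ => by ring

@[simp] lemma symplecticTrace_Omega_right_mul {g : V n → ℝ} (hg : IsLinearMap ℝ g) (Y : V n) :
    symplecticTrace (fun a b => Omega n Y a * g b) = -g Y := by
  have : (fun a b => Omega n Y a * g b) = fun a b => -1 * (Omega n a Y * g b) := by
    funext a b; rw [Omega_swap a Y]; ring
  rw [this, symplecticTrace_const_mul, symplecticTrace_Omega_left_mul hg]; ring

@[simp] lemma symplecticTrace_Omega_right_mul_swap {g : V n → ℝ} (hg : IsLinearMap ℝ g)
    (Y : V n) : symplecticTrace (fun a b => Omega n Y b * g a) = g Y := by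
  rw [symplecticTrace_swap (fun a b => Omega n Y a * g b), symplecticTrace_Omega_right_mul hg,
    neg_neg]

lemma isLinearMap_symplecticTrace {F : V n → V n → V n → ℝ}
    (hF : ∀ a b, IsLinearMap ℝ (F · a b)) :
    IsLinearMap ℝ (fun A => symplecticTrace (F A)) := by
  constructor
  · intro A A'
    simp only [symplecticTrace, (hF _ _).map_add, ← Finset.sum_add_distrib]
    exact Finset.sum_congr rfl fun i _ => by ring
  · intro c A
    simp only [symplecticTrace, (hF _ _).map_smul, smul_eq_mul, Finset.mul_sum]
    exact Finset.sum_congr rfl fun i _ => by ring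

def ricciPart (ρ : V n → V n → ℝ) (X Y Z T : V n) : ℝ :=
  -(1/(2*((n:ℝ)+1))) * (2 * Omega n X Y * ρ Z T + Omega n X Z * ρ Y T + Omega n X T * ρ Y Z
      - Omega n Y Z * ρ X T - Omega n Y T * ρ X Z)

lemma symm_of_eq_symplecticTrace_ricciPart {ρ : V n → V n → ℝ}
    (hρ₁ : ∀ Y, IsLinearMap ℝ (ρ · Y)) (hρ₂ : ∀ X, IsLinearMap ℝ (ρ X))
    (h : ∀ X Y, ρ X Y = symplecticTrace (fun a b => ricciPart ρ X a Y b)) (X Y : V n) :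
    ρ X Y = ρ Y X := by
  have antisymm : ∀ X Y, 2 * (ρ X Y - ρ Y X) + Omega n X Y * symplecticTrace ρ = 0 := by
    intro X Y
    have := h X Y
    simp only [ricciPart, mul_assoc, symplecticTrace_const_mul, symplecticTrace_add,
      symplecticTrace_sub, symplecticTrace_Omega_left_mul, symplecticTrace_Omega_right_mul,
      symplecticTrace_Omega_right_mul_swap, symplecticTrace_Omega_mul, hρ₁, hρ₂] at this
    field_simp at this
    linarith
  have htrace := congrArg symplecticTrace (funext₂ antisymm)
  simp only [symplecticTrace_add, symplecticTrace_const_mul, symplecticTrace_sub,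
    symplecticTrace_swap ρ, symplecticTrace_Omega_mul] at htrace
  have hτ : (4 + 2 * n : ℝ) * symplecticTrace ρ = 0 := by
    rw [symplecticTrace_zero] at htrace
    linarith
  have := antisymm X Y
  rw [(mul_eq_zero.1 hτ).resolve_left (by positivity)] at this
  linarith

def CyclicRicciPart (S : V n → V n → V n → ℝ) : Prop :=
  ∀ X Y Z W T, ricciPart (S X) Y Z W T + ricciPart (S Y) Z X W T + ricciPart (S Z) X Y W T = 0

namespace CyclicRicciPart

variable {S : V n → V n → V n → ℝ}

lemma contract (hS₁ : ∀ Y Z, IsLinearMap ℝ (S · Y Z))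
    (hS₂ : ∀ X Z, IsLinearMap ℝ (S X · Z)) (hS₃ : ∀ X Y, IsLinearMap ℝ (S X Y))
    (hsymm : ∀ X Y Z, S X Y Z = S X Z Y) (h : CyclicRicciPart S) (X Y W : V n) :
    (2 * n + 1) * (S Y X W - S X Y W) + 2 * Omega n X Y * symplecticTrace (fun a b => S a W b)
      + Omega n X W * symplecticTrace (fun a b => S a Y b)
      - Omega n Y W * symplecticTrace (fun a b => S a X b) = 0 := by
  have := congrArg symplecticTrace (funext₂ (h X Y · W ·))
  simp only [ricciPart, mul_assoc, symplecticTrace_const_mul, symplecticTrace_add,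
    symplecticTrace_sub, symplecticTrace_Omega_left_mul, symplecticTrace_Omega_right_mul,
    symplecticTrace_Omega_right_mul_swap, symplecticTrace_Omega_mul, symplecticTrace_zero,
    symplecticTrace_eq_zero_of_symm (hsymm _), hS₁, hS₂, hS₃] at this
  field_simp at this
  rw [hsymm X W Y, hsymm Y W X] at this
  linear_combination -this

lemma const_mul_sub (c : ℝ) {S' : V n → V n → V n → ℝ} (h : CyclicRicciPart S)
    (h' : CyclicRicciPart S') : CyclicRicciPart (fun X Y Z => c * S X Y Z - S' X Y Z) := by
  intro X Y Z W T
  have e := h X Y Z W T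
  have e' := h' X Y Z W T
  simp only [ricciPart] at *
  linear_combination c * e - e'

lemma Omega_mul_diag (h₁₂ : ∀ X Y Z, S X Y Z = S Y X Z) (h : CyclicRicciPart S)
    (X Y Z W : V n) :
    Omega n Y Z * S X W W + Omega n Z X * S Y W W + Omega n X Y * S Z W W = 0 := by
  have e := h X Y Z W W
  simp only [ricciPart] at e
  rw [h₁₂ X Z W, h₁₂ X Y W, h₁₂ Y Z W] at e
  field_simp at e
  linear_combination -e / 2

end CyclicRicciPart

lemma cyclicRicciPart_Omega_mul (g : V n → ℝ) :
    CyclicRicciPart (fun X Y Z => Omega n X Y * g Z + Omega n X Z * g Y) := by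
  intro X Y Z W T
  simp only [ricciPart]
  rw [Omega_swap X Y, Omega_swap X Z, Omega_swap Y Z]
  ring

lemma eq_zero_of_cyclic_Omega_mul (hn : 2 ≤ n) {f : V n → ℝ} (hf : IsLinearMap ℝ f)
    (h : ∀ X Y Z, Omega n Y Z * f X + Omega n Z X * f Y + Omega n X Y * f Z = 0) (X : V n) :
    f X = 0 := by
  rw [hf.apply_eq_sum_mul_single X]
  refine Finset.sum_eq_zero fun a _ => ?_
  obtain ⟨j, hlo, hhi⟩ : ∃ j : Fin n, lo j ≠ a ∧ hi j ≠ a := by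
    refine if ha : a.1 = 0 ∨ a.1 = n then ⟨⟨1, by omega⟩, ?_⟩ else ⟨⟨0, by omega⟩, ?_⟩ <;>
      simp only [lo, hi, ne_eq, Fin.ext_iff] <;> omega
  have := h (Pi.single a 1) (Pi.single (lo j) 1) (Pi.single (hi j) 1)
  simp only [Omega_single_hi, Pi.single_eq_same, one_mul, Omega_single_hi_left, ne_eq, hlo,
    not_false_eq_true, Pi.single_eq_of_ne, neg_zero, zero_mul, add_zero, Omega_single_lo, hhi]
    at this
  simp [this]

theorem CyclicRicciPart.eq_Omega_mul (hn : 2 ≤ n) {S : V n → V n → V n → ℝ}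
    (hS₁ : ∀ Y Z, IsLinearMap ℝ (S · Y Z)) (hS₂ : ∀ X Z, IsLinearMap ℝ (S X · Z))
    (hsymm : ∀ X Y Z, S X Y Z = S X Z Y) (h : CyclicRicciPart S) (X Y Z : V n) :
    (2 * n + 1) * S X Y Z = Omega n X Y * symplecticTrace (fun a b => S a Z b)
      + Omega n X Z * symplecticTrace (fun a b => S a Y b) := by
  set u := fun A => symplecticTrace (fun a b => S a A b)
  have hu : IsLinearMap ℝ u := isLinearMap_symplecticTrace fun a b => hS₂ a b
  have hS₃ : ∀ X Y, IsLinearMap ℝ (S X Y) := fun X Y => by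
    convert hS₂ X Y using 1
    exact funext (hsymm X Y)
  set A := fun X Y Z => (2 * n + 1) * S X Y Z - (Omega n X Y * u Z + Omega n X Z * u Y)
  have hA₁₂ : ∀ X Y Z, A X Y Z = A Y X Z := fun X Y Z => by
    linear_combination -h.contract hS₁ hS₂ hS₃ hsymm X Y Z + u Z * Omega_swap X Y
  have hdiag : ∀ X W, A X W W = 0 := fun X W => by
    refine eq_zero_of_cyclic_Omega_mul hn (f := (A · W W)) ?_ ?_ X
    · constructor <;> intros <;>
        simp only [A, (hS₁ _ _).map_add, (hS₁ _ _).map_smul, Omega_add_left, Omega_smul_left,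
          smul_eq_mul] <;> ring
    · exact ((h.const_mul_sub _ (cyclicRicciPart_Omega_mul u)).Omega_mul_diag hA₁₂ · · · W)
  have hYZ := hdiag X (Y + Z)
  have hY := hdiag X Y
  have hZ := hdiag X Z
  simp only [A, (hS₂ _ _).map_add, (hS₃ _ _).map_add, hu.map_add, Omega_add_right]
    at hYZ hY hZ
  change _ = Omega n X Y * u Z + Omega n X Z * u Y
  linear_combination hYZ / 2 - hY / 2 - hZ / 2 + (2 * n + 1) / 2 * hsymm X Y Z

section Connection

variable (Γ : V n → V n →L[ℝ] V n →L[ℝ] V n)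

lemma curv_apply (x X Y W : V n) : curv n Γ x X Y W =
    fderiv ℝ Γ x X Y W - fderiv ℝ Γ x Y X W + Γ x X (Γ x Y W) - Γ x Y (Γ x X W) := by
  simp [curv]

lemma curv_add_left (x X X' Y : V n) :
    curv n Γ x (X + X') Y = curv n Γ x X Y + curv n Γ x X' Y := by
  ext W a
  simp only [curv_apply, map_add, add_apply, Pi.add_apply, Pi.sub_apply]
  ring

lemma curv_smul_left (x : V n) (c : ℝ) (X Y : V n) :
    curv n Γ x (c • X) Y = c • curv n Γ x X Y := by
  ext W a
  simp only [curv_apply, map_smul, smul_apply, Pi.smul_apply, smul_eq_mul,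
    Pi.sub_apply, Pi.add_apply]
  ring

lemma ricci_add_left (x X X' Y : V n) :
    ricci n Γ x (X + X') Y = ricci n Γ x X Y + ricci n Γ x X' Y := by
  simp only [ricci, curv_add_left, add_apply, Pi.add_apply, Finset.sum_add_distrib]

lemma ricci_smul_left (x : V n) (c : ℝ) (X Y : V n) :
    ricci n Γ x (c • X) Y = c * ricci n Γ x X Y := by
  simp only [ricci, curv_smul_left, smul_apply, Pi.smul_apply, smul_eq_mul, Finset.mul_sum]

lemma ricci_add_right (x X Y Y' : V n) :
    ricci n Γ x X (Y + Y') = ricci n Γ x X Y + ricci n Γ x X Y' := by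
  simp only [ricci, map_add, Pi.add_apply, Finset.sum_add_distrib]

lemma ricci_smul_right (x X : V n) (c : ℝ) (Y : V n) :
    ricci n Γ x X (c • Y) = c * ricci n Γ x X Y := by
  simp only [ricci, map_smul, Pi.smul_apply, smul_eq_mul, Finset.mul_sum]

lemma isLinearMap_ricci_left (x Y : V n) : IsLinearMap ℝ (ricci n Γ x · Y) :=
  ⟨(ricci_add_left Γ x · · Y), (ricci_smul_left Γ x · · Y)⟩

lemma isLinearMap_ricci_right (x X : V n) : IsLinearMap ℝ (ricci n Γ x X) :=
  ⟨ricci_add_right Γ x X, ricci_smul_right Γ x X⟩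

lemma ricci_eq_symplecticTrace (x X Y : V n) :
    ricci n Γ x X Y = symplecticTrace (fun a b => Omega n (curv n Γ x X a Y) b) :=
  trace_eq_symplecticTrace (fun a => curv n Γ x X a Y)

variable {Γ}

lemma _root_.IsRicciType.Omega_curv (hR : IsRicciType n Γ) (x X Y Z T : V n) :
    Omega n (curv n Γ x X Y Z) T = ricciPart (ricci n Γ x) X Y Z T :=
  hR x X Y Z T

lemma ricci_comm (hR : IsRicciType n Γ) (x X Y : V n) : ricci n Γ x X Y = ricci n Γ x Y X :=
  symm_of_eq_symplecticTrace_ricciPart (isLinearMap_ricci_left Γ x) (isLinearMap_ricci_right Γ x)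
    (fun X Y => (ricci_eq_symplecticTrace Γ x X Y).trans
      (congrArg symplecticTrace (funext₂ fun a b => hR.Omega_curv x X a Y b))) X Y

lemma contDiff_curv_apply (hΓ : ContDiff ℝ ∞ Γ) {A B W : V n → V n} (hA : ContDiff ℝ ∞ A)
    (hB : ContDiff ℝ ∞ B) (hW : ContDiff ℝ ∞ W) :
    ContDiff ℝ ∞ (fun p => curv n Γ p (A p) (B p) (W p)) := by
  have hD : ContDiff ℝ ∞ (fderiv ℝ Γ) := hΓ.fderiv_right (by simp)
  simp only [curv_apply]
  fun_prop

lemma contDiff_ricci_apply (hΓ : ContDiff ℝ ∞ Γ) {A B : V n → V n} (hA : ContDiff ℝ ∞ A)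
    (hB : ContDiff ℝ ∞ B) : ContDiff ℝ ∞ (fun p => ricci n Γ p (A p) (B p)) :=
  ContDiff.sum fun a _ => contDiff_pi.1 (contDiff_curv_apply hΓ hA contDiff_const hB) a

lemma fderiv_curv_apply (hΓ : ContDiff ℝ ∞ Γ) (x X Y Z W : V n) :
    fderiv ℝ (fun p => curv n Γ p Y Z W) x X =
      fderiv ℝ (fderiv ℝ Γ) x X Y Z W - fderiv ℝ (fderiv ℝ Γ) x X Z Y W
        + fderiv ℝ Γ x X Y (Γ x Z W) + Γ x Y (fderiv ℝ Γ x X Z W)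
        - fderiv ℝ Γ x X Z (Γ x Y W) - Γ x Z (fderiv ℝ Γ x X Y W) := by
  have h1 : Differentiable ℝ Γ := hΓ.differentiable (by simp)
  have h2 : Differentiable ℝ (fderiv ℝ Γ) :=
    (hΓ.fderiv_right (m := ∞) (by simp)).differentiable (by simp)
  simp (disch := fun_prop) only [curv_apply, fderiv_fun_sub, fderiv_fun_add, fderiv_clm_apply,
    fderiv_fun_const, Pi.zero_apply, ContinuousLinearMap.comp_zero, zero_add, sub_apply, add_apply,
    ContinuousLinearMap.flip_apply, ContinuousLinearMap.comp_apply]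
  abel

def nablaCurv (Γ : V n → V n →L[ℝ] V n →L[ℝ] V n) (x U Y Z W : V n) : V n :=
  fderiv ℝ (fun p => curv n Γ p Y Z W) x U - curv n Γ x (Γ x U Y) Z W
    - curv n Γ x Y (Γ x U Z) W - curv n Γ x Y Z (Γ x U W) + Γ x U (curv n Γ x Y Z W)

lemma nablaCurv_cyclic (hΓ : ContDiff ℝ ∞ Γ) (hΓsymm : ∀ x a b, Γ x a b = Γ x b a)
    (x X Y Z W : V n) :
    nablaCurv Γ x X Y Z W + nablaCurv Γ x Y Z X W + nablaCurv Γ x Z X Y W = 0 := by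
  have hD2 : ∀ a b, fderiv ℝ (fderiv ℝ Γ) x a b = fderiv ℝ (fderiv ℝ Γ) x b a :=
    second_derivative_symmetric (fun p => (hΓ.differentiable (by simp) p).hasFDerivAt)
      ((hΓ.fderiv_right (m := ∞) (by simp)).differentiable (by simp) x).hasFDerivAt
  simp only [nablaCurv, fderiv_curv_apply hΓ]
  simp only [curv_apply, map_add, map_sub]
  rw [hΓsymm x Y X, hΓsymm x Z Y, hΓsymm x X Z, hD2 Y X, hD2 Z Y, hD2 X Z]
  abel

lemma fderiv_Omega_left {f : V n → V n} {x : V n} (hf : DifferentiableAt ℝ f x) (T U : V n) :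
    fderiv ℝ (fun p => Omega n (f p) T) x U = Omega n (fderiv ℝ f x U) T := by
  let ℓ : V n →L[ℝ] ℝ := LinearMap.toContinuousLinearMap
    (IsLinearMap.mk' (Omega n · T) ⟨(Omega_add_left · · T), (Omega_smul_left · · T)⟩)
  exact congrArg (· U) (ℓ.hasFDerivAt.comp x hf.hasFDerivAt).fderiv

lemma fderiv_ricciPart {ρ : V n → V n → V n → ℝ} {x : V n}
    (hρ : ∀ A B, DifferentiableAt ℝ (fun p => ρ p A B) x) (U Y Z W T : V n) :
    fderiv ℝ (fun p => ricciPart (ρ p) Y Z W T) x U =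
      ricciPart (fun A B => fderiv ℝ (fun p => ρ p A B) x U) Y Z W T := by
  simp (disch := fun_prop) [ricciPart, fderiv_fun_add, fderiv_fun_sub, fderiv_const_mul]

lemma Omega_Γ_left (hΓskew : ∀ x X Y Z, Omega n (Γ x X Y) Z = Omega n (Γ x X Z) Y)
    (x U v w : V n) : Omega n (Γ x U v) w = -Omega n v (Γ x U w) := by
  rw [hΓskew, Omega_swap]

lemma Omega_nablaCurv (hΓ : ContDiff ℝ ∞ Γ)
    (hΓskew : ∀ x X Y Z, Omega n (Γ x X Y) Z = Omega n (Γ x X Z) Y) (hR : IsRicciType n Γ)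
    (x U Y Z W T : V n) :
    Omega n (nablaCurv Γ x U Y Z W) T = ricciPart (nablaRicci n Γ x U) Y Z W T := by
  have hcurv : DifferentiableAt ℝ (fun p => curv n Γ p Y Z W) x :=
    (contDiff_curv_apply hΓ contDiff_const contDiff_const contDiff_const).differentiable
      (by simp) x
  have hricci : ∀ A B, DifferentiableAt ℝ (fun p => ricci n Γ p A B) x := fun A B =>
    (contDiff_ricci_apply hΓ contDiff_const contDiff_const).differentiable (by simp) x
  simp only [nablaCurv, Omega_add_left, Omega_sub_left, Omega_Γ_left hΓskew]
  rw [← fderiv_Omega_left hcurv, funext (hR.Omega_curv · Y Z W T), fderiv_ricciPart hricci,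
    hR.Omega_curv x (Γ x U Y), hR.Omega_curv x Y (Γ x U Z), hR.Omega_curv x Y Z (Γ x U W),
    hR.Omega_curv x Y Z W (Γ x U T)]
  simp only [ricciPart, nablaRicci, Omega_Γ_left hΓskew]
  ring

lemma Γ_comm (hΓtorsion : ∀ x X Y Z, Omega n (Γ x X Y) Z = Omega n (Γ x Y X) Z)
    (x X Y : V n) : Γ x X Y = Γ x Y X :=
  sub_eq_zero.1 <| eq_zero_of_Omega_eq_zero fun Z => by rw [Omega_sub_left, hΓtorsion, sub_self]

lemma cyclicRicciPart_nablaRicci (hΓ : ContDiff ℝ ∞ Γ)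
    (hΓsymm : ∀ x X Y, Γ x X Y = Γ x Y X)
    (hΓskew : ∀ x X Y Z, Omega n (Γ x X Y) Z = Omega n (Γ x X Z) Y) (hR : IsRicciType n Γ)
    (x : V n) : CyclicRicciPart (nablaRicci n Γ x) := by
  intro X Y Z W T
  simp only [← Omega_nablaCurv hΓ hΓskew hR, ← Omega_add_left, nablaCurv_cyclic hΓ hΓsymm]
  simp [Omega_apply]

lemma nablaRicci_comm (hR : IsRicciType n Γ) (x X Y Z : V n) :
    nablaRicci n Γ x X Y Z = nablaRicci n Γ x X Z Y := by
  simp only [nablaRicci, ricci_comm hR _ Y Z, ricci_comm hR _ (Γ x X Y) Z,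
    ricci_comm hR x Y (Γ x X Z)]
  ring

lemma isLinearMap_nablaRicci_left (x Y Z : V n) : IsLinearMap ℝ (nablaRicci n Γ x · Y Z) where
  map_add X X' := by
    simp only [nablaRicci, map_add, add_apply, ricci_add_left, ricci_add_right]
    ring
  map_smul c X := by
    simp only [nablaRicci, map_smul, smul_apply, smul_eq_mul, ricci_smul_left, ricci_smul_right]
    ring

lemma isLinearMap_nablaRicci_middle (hΓ : ContDiff ℝ ∞ Γ) (x X Z : V n) :
    IsLinearMap ℝ (nablaRicci n Γ x X · Z) := by
  have hricci : ∀ A B, DifferentiableAt ℝ (fun p => ricci n Γ p A B) x := fun A B =>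
    (contDiff_ricci_apply hΓ contDiff_const contDiff_const).differentiable (by simp) x
  constructor
  · intro Y Y'
    simp (disch := fun_prop) only [nablaRicci, map_add, ricci_add_left, fderiv_fun_add, add_apply]
    ring
  · intro c Y
    simp (disch := fun_prop) only [nablaRicci, map_smul, ricci_smul_left, fderiv_const_mul,
      smul_apply, smul_eq_mul]
    ring

lemma contDiff_nablaRicci (hΓ : ContDiff ℝ ∞ Γ) (X Y Z : V n) :
    ContDiff ℝ ∞ (fun x => nablaRicci n Γ x X Y Z) := by
  have hD : ContDiff ℝ ∞ (fun x => fderiv ℝ (fun p => ricci n Γ p Y Z) x X) :=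
    ((contDiff_ricci_apply hΓ contDiff_const contDiff_const).fderiv_right (by simp)).clm_apply
      contDiff_const
  exact (hD.sub (contDiff_ricci_apply hΓ (by fun_prop) contDiff_const)).sub
    (contDiff_ricci_apply hΓ contDiff_const (by fun_prop))

end Connection

end SymplecticRicci

open SymplecticRicci

theorem ricci_type_nabla_ricci (n : ℕ) (hn : 2 ≤ n)
    (Γ : (Fin (2*n) → ℝ) → (Fin (2*n) → ℝ) →L[ℝ] (Fin (2*n) → ℝ) →L[ℝ] (Fin (2*n) → ℝ))
    (hΓ : ContDiff ℝ (⊤ : ℕ∞) Γ)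
    (hsym₁ : ∀ x X Y Z, Omega n (Γ x X Y) Z = Omega n (Γ x Y X) Z)
    (hsym₂ : ∀ x X Y Z, Omega n (Γ x X Y) Z = Omega n (Γ x X Z) Y)
    (hR : IsRicciType n Γ) :
    ∃ u : (Fin (2*n) → ℝ) → ((Fin (2*n) → ℝ) →L[ℝ] ℝ),
      ContDiff ℝ (⊤ : ℕ∞) u ∧
      ∀ x X Y Z, nablaRicci n Γ x X Y Z =
        (1/(2*(n:ℝ)+1)) * (Omega n X Y * u x Z + Omega n X Z * u x Y) := by
  have hu : ∀ x, IsLinearMap ℝ fun A => symplecticTrace fun a b => nablaRicci n Γ x a A b :=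
    fun x => isLinearMap_symplecticTrace fun a b => isLinearMap_nablaRicci_middle hΓ x a b
  refine ⟨fun x => LinearMap.toContinuousLinearMap (IsLinearMap.mk' _ (hu x)), ?_, ?_⟩
  · refine contDiff_clm_apply_iff.2 fun A => ?_
    simp only [LinearMap.coe_toContinuousLinearMap', IsLinearMap.mk'_apply, symplecticTrace]
    refine ContDiff.sum fun i _ => ?_
    exact (contDiff_nablaRicci hΓ _ _ _).sub (contDiff_nablaRicci hΓ _ _ _)
  · intro x X Y Z
    have := (cyclicRicciPart_nablaRicci hΓ (Γ_comm hsym₁) hsym₂ hR x).eq_Omega_mul hn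
      (isLinearMap_nablaRicci_left x) (isLinearMap_nablaRicci_middle hΓ x)
      (nablaRicci_comm hR x) X Y Z
    simp only [LinearMap.coe_toContinuousLinearMap', IsLinearMap.mk'_apply]
    field_simp
    linear_combination this
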